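/- arXiv:2311.06568 — 4 statements merged into one kernel-verified Lean document; each statement's English description precedes it below -/
import Mathlib

section
/- If τ is a sentence provable in T and γ is a Gödelian sentence of T (i.e., T ⊢ γ ↔ ¬Pr_T(#γ)), then the conjunction τ ∧ γ is also a Gödelian sentence of T. -/
/-- An abstract propositional-logical syntax for sentences of arithmetic. -/
structure PropLang where
  Sent : Type
  falsum : Sent
  neg : Sent → Sent
  imp : Sent → Sent → Sent
  conj : Sent → Sent → Sent
  disj : Sent → Sent → Sent
  iffS : Sent → Sent → Sent

namespace PropLang

/-- A valuation (e.g. truth in the standard model ℕ) commuting with the connectives. -/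
def IsValuation (L : PropLang) (v : L.Sent → Prop) : Prop :=
  (¬ v L.falsum) ∧
  (∀ a, v (L.neg a) ↔ ¬ v a) ∧
  (∀ a b, v (L.imp a b) ↔ (v a → v b)) ∧
  (∀ a b, v (L.conj a b) ↔ (v a ∧ v b)) ∧
  (∀ a b, v (L.disj a b) ↔ (v a ∨ v b)) ∧
  (∀ a b, v (L.iffS a b) ↔ (v a ↔ v b))

/-- Propositional tautologies: sentences true under every valuation. -/
def Taut (L : PropLang) (s : L.Sent) : Prop :=
  ∀ v : L.Sent → Prop, L.IsValuation v → v s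

end PropLang

/-- A (recursively axiomatized) theory together with its provability
predicate `Pr`; `Pr σ` denotes the sentence `Pr_T(#σ)`. -/
structure TheoryOn (L : PropLang) where
  Prv : L.Sent → Prop
  Pr : L.Sent → L.Sent

namespace TheoryOn

variable {L : PropLang}

/-- `T` is closed under classical propositional logic. -/
def ClosedUnderLogic (T : TheoryOn L) : Prop :=
  (∀ s, L.Taut s → T.Prv s) ∧
  (∀ a b, T.Prv (L.imp a b) → T.Prv a → T.Prv b)

/-- Consistency of `T`. -/
def Consistent (T : TheoryOn L) : Prop :=
  ¬ ∃ s, T.Prv s ∧ T.Prv (L.neg s)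

/-- Soundness of `T` with respect to truth in the standard model. -/
def Sound (T : TheoryOn L) (TrN : L.Sent → Prop) : Prop :=
  ∀ s, T.Prv s → TrN s

/-- `γ` is a Gödelian sentence of `T`: `T ⊢ γ ↔ ¬Pr_T(#γ)`. -/
def Godelian (T : TheoryOn L) (γ : L.Sent) : Prop :=
  T.Prv (L.iffS γ (L.neg (T.Pr γ)))

/-- The Hilbert–Bernays–Löb derivability conditions for `Pr_T`. -/
def HBL (T : TheoryOn L) : Prop :=
  (∀ s, T.Prv s → T.Prv (T.Pr s)) ∧
  (∀ a b, T.Prv (L.imp (T.Pr (L.imp a b)) (L.imp (T.Pr a) (T.Pr b)))) ∧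
  (∀ s, T.Prv (L.imp (T.Pr s) (T.Pr (T.Pr s))))

/-- `Pr_T` is a standard provability predicate:
`ℕ ⊨ Pr_T(#σ)` iff `T ⊢ σ`. -/
def PrStandard (T : TheoryOn L) (TrN : L.Sent → Prop) : Prop :=
  ∀ s, TrN (T.Pr s) ↔ T.Prv s

end TheoryOn

/-- If `τ` is `T`-provable and `γ` is a Gödelian sentence of `T`,
then `τ ∧ γ` is a Gödelian sentence of `T`. -/
theorem provable_conj_godelian (L : PropLang) (T : TheoryOn L)
    (hLog : T.ClosedUnderLogic) (hHBL : T.HBL)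
    (τ γ : L.Sent) (hτ : T.Prv τ) (hγ : T.Godelian γ) :
    T.Godelian (L.conj τ γ) := by
  obtain ⟨htaut, hmp⟩ := hLog
  obtain ⟨d1, d2, _⟩ := hHBL
  -- T ⊢ γ → (τ ∧ γ)
  have h1 : T.Prv (L.imp γ (L.conj τ γ)) := by
    apply hmp _ _ _ hτ
    apply htaut
    intro v ⟨_, _, hi, hc, _, _⟩
    simp only [hi, hc]; tauto
  -- T ⊢ Pr γ → Pr (τ ∧ γ)
  have h2 : T.Prv (L.imp (T.Pr γ) (T.Pr (L.conj τ γ))) :=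
    hmp _ _ (d2 _ _) (d1 _ h1)
  -- T ⊢ (τ ∧ γ) → γ
  have h3 : T.Prv (L.imp (L.conj τ γ) γ) := by
    apply htaut
    intro v ⟨_, _, hi, hc, _, _⟩
    simp only [hi, hc]; tauto
  have h4 : T.Prv (L.imp (T.Pr (L.conj τ γ)) (T.Pr γ)) :=
    hmp _ _ (d2 _ _) (d1 _ h3)
  -- final tautology chain
  have h5 : T.Prv (L.imp τ (L.imp (L.iffS γ (L.neg (T.Pr γ)))
      (L.imp (L.imp (T.Pr γ) (T.Pr (L.conj τ γ)))
        (L.imp (L.imp (T.Pr (L.conj τ γ)) (T.Pr γ))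
          (L.iffS (L.conj τ γ) (L.neg (T.Pr (L.conj τ γ)))))))) := by
    apply htaut
    intro v ⟨_, hn, hi, hc, _, hiff⟩
    simp only [hi, hc, hiff, hn]; tauto
  exact hmp _ _ (hmp _ _ (hmp _ _ (hmp _ _ h5 hτ) hγ) h2) h4
end

section
/- If T is a consistent recursively axiomatized extension of Robinson's arithmetic Q and γ is a Gödelian sentence of T, then γ is not provable in T. -/
/-- If `T` is a consistent r.e. extension of Q and `γ` is a
Gödelian sentence of `T`, then `γ` is not provable in `T`. -/
theorem godelian_unprovable (L : PropLang) (T : TheoryOn L)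
    (hLog : T.ClosedUnderLogic)
    (hD1 : ∀ s, T.Prv s → T.Prv (T.Pr s))
    (hCons : T.Consistent)
    (γ : L.Sent) (hγ : T.Godelian γ) :
    ¬ T.Prv γ := by
  intro hPγ
  have hPr : T.Prv (T.Pr γ) := hD1 γ hPγ
  -- tautology: (γ ↔ ¬Pr γ) → (γ → ¬Pr γ)
  have htaut : L.Taut (L.imp (L.iffS γ (L.neg (T.Pr γ))) (L.imp γ (L.neg (T.Pr γ)))) := by
    intro v hv
    obtain ⟨_, hneg, himp, _, _, hiff⟩ := hv
    rw [himp, himp]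
    intro h hg
    exact (hiff _ _).1 h |>.1 hg
  have h1 : T.Prv (L.imp γ (L.neg (T.Pr γ))) :=
    hLog.2 _ _ (hLog.1 _ htaut) hγ
  have h2 : T.Prv (L.neg (T.Pr γ)) := hLog.2 _ _ h1 hPγ
  exact hCons ⟨T.Pr γ, hPr, h2⟩
end

section
/- A theory T is sound (every T-provable sentence is true in the standard model ℕ) if and only if every Gödelian sentence of T is true in ℕ. -/
namespace PropLang

variable {L : PropLang} {v : L.Sent → Prop}

theorem IsValuation.neg (hv : L.IsValuation v) (a : L.Sent) : v (L.neg a) ↔ ¬ v a :=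
  hv.2.1 a

theorem IsValuation.imp (hv : L.IsValuation v) (a b : L.Sent) :
    v (L.imp a b) ↔ (v a → v b) :=
  hv.2.2.1 a b

theorem IsValuation.conj (hv : L.IsValuation v) (a b : L.Sent) :
    v (L.conj a b) ↔ (v a ∧ v b) :=
  hv.2.2.2.1 a b

theorem IsValuation.iffS (hv : L.IsValuation v) (a b : L.Sent) :
    v (L.iffS a b) ↔ (v a ↔ v b) :=
  hv.2.2.2.2.2 a b

end PropLang

namespace TheoryOn

variable {L : PropLang} {T : TheoryOn L}

theorem ClosedUnderLogic.prv_of_taut_imp (hLog : T.ClosedUnderLogic) {a b : L.Sent}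
    (hab : L.Taut (L.imp a b)) (ha : T.Prv a) : T.Prv b :=
  hLog.2 a b (hLog.1 _ hab) ha

theorem HBL.prv_pr_imp_pr (hLog : T.ClosedUnderLogic) (hHBL : T.HBL) {a b : L.Sent}
    (hab : T.Prv (L.imp a b)) : T.Prv (L.imp (T.Pr a) (T.Pr b)) :=
  hLog.2 _ _ (hHBL.2.1 a b) (hHBL.1 _ hab)

/-- Being Gödelian is invariant under provable equivalence, since `Pr` respects it. -/
theorem godelian_of_prv_imp_of_prv_imp (hLog : T.ClosedUnderLogic) (hHBL : T.HBL)
    {γ δ : L.Sent} (hγ : T.Godelian γ) (hγδ : T.Prv (L.imp γ δ))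
    (hδγ : T.Prv (L.imp δ γ)) : T.Godelian δ := by
  have hPγδ := hHBL.prv_pr_imp_pr hLog hγδ
  have hPδγ := hHBL.prv_pr_imp_pr hLog hδγ
  have htaut : L.Taut (L.imp (L.iffS γ (L.neg (T.Pr γ))) (L.imp (L.imp γ δ)
      (L.imp (L.imp δ γ) (L.imp (L.imp (T.Pr γ) (T.Pr δ)) (L.imp (L.imp (T.Pr δ) (T.Pr γ))
      (L.iffS δ (L.neg (T.Pr δ)))))))) := by
    intro v hv
    simp only [hv.imp, hv.iffS, hv.neg]
    tauto
  exact hLog.2 _ _ (hLog.2 _ _ (hLog.2 _ _ (hLog.2 _ _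
    (hLog.prv_of_taut_imp htaut hγ) hγδ) hδγ) hPγδ) hPδγ

theorem godelian_conj_of_prv (hLog : T.ClosedUnderLogic) (hHBL : T.HBL)
    {γ s : L.Sent} (hγ : T.Godelian γ) (hs : T.Prv s) : T.Godelian (L.conj γ s) := by
  have hγs : T.Prv (L.imp γ (L.conj γ s)) := by
    refine hLog.prv_of_taut_imp (a := s) (fun v hv => ?_) hs
    simp only [hv.imp, hv.conj]
    tauto
  have hsγ : T.Prv (L.imp (L.conj γ s) γ) := hLog.1 _ fun v hv => by
    simp only [hv.imp, hv.conj]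
    tauto
  exact godelian_of_prv_imp_of_prv_imp hLog hHBL hγ hγs hsγ

/-- A true Gödelian sentence is unprovable, so a sound theory cannot prove a false one. -/
theorem Sound.godelian_true {TrN : L.Sent → Prop} (hTrN : L.IsValuation TrN)
    (hStd : T.PrStandard TrN) (hS : T.Sound TrN) {γ : L.Sent} (hγ : T.Godelian γ) :
    TrN γ := by
  have hfix : TrN γ ↔ ¬ T.Prv γ := by
    simpa only [hTrN.iffS, hTrN.neg, hStd γ] using hS _ hγ
  exact hfix.mpr fun hprv => hfix.mp (hS γ hprv) hprv

/-- A provable `s` is recovered from the Gödelian sentence `γ ∧ s`. -/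
theorem sound_of_forall_godelian_true (hLog : T.ClosedUnderLogic) (hHBL : T.HBL)
    {TrN : L.Sent → Prop} (hTrN : L.IsValuation TrN) (hDiag : ∃ γ, T.Godelian γ)
    (hG : ∀ γ, T.Godelian γ → TrN γ) : T.Sound TrN := by
  intro s hs
  obtain ⟨γ, hγ⟩ := hDiag
  exact ((hTrN.conj γ s).mp (hG _ (godelian_conj_of_prv hLog hHBL hγ hs))).2

end TheoryOn

theorem sound_iff_all_godelian_true_general (L : PropLang) (TrN : L.Sent → Prop)
    (hTrN : L.IsValuation TrN) (T : TheoryOn L)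
    (hLog : T.ClosedUnderLogic) (hHBL : T.HBL)
    (hStd : T.PrStandard TrN)
    (hDiag : ∃ γ, T.Godelian γ) :
    T.Sound TrN ↔ ∀ γ, T.Godelian γ → TrN γ :=
  ⟨fun hS _ hγ => hS.godelian_true hTrN hStd hγ,
    TheoryOn.sound_of_forall_godelian_true hLog hHBL hTrN hDiag⟩

/-- `T` is sound iff every Gödelian sentence of `T` is true in ℕ. -/
theorem sound_iff_all_godelian_true (L : PropLang) (TrN : L.Sent → Prop)
    (hTrN : L.IsValuation TrN) (T : TheoryOn L)
    (hLog : T.ClosedUnderLogic) (hHBL : T.HBL)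
    (hCons : T.Consistent)
    (hStd : T.PrStandard TrN)
    (hDiag : ∃ γ, T.Godelian γ) :
    T.Sound TrN ↔ ∀ γ, T.Godelian γ → TrN γ :=
  sound_iff_all_godelian_true_general L TrN hTrN T hLog hHBL hStd hDiag
end

section
/- If a sentence ψ says of itself, in the eye of T, that it is axiomatically decidable, i.e., T ⊢ ψ ↔ (Pr_T(#ψ) ∨ Pr_T(#¬ψ)), then T ⊢ ψ; consequently ψ is indeed T-decidable (and Pr_T(#ψ) holds in ℕ). -/
/-- The theory `T + θ`, with provability via the deduction theorem. -/
def TheoryOn.ext {L : PropLang} (T : TheoryOn L) (θ : L.Sent) : TheoryOn L where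
  Prv s := T.Prv (L.imp θ s)
  Pr s := T.Pr (L.imp θ s)

/-- If `T ⊢ ψ ↔ (Pr_T(#ψ) ∨ Pr_T(#¬ψ))` then `T ⊢ ψ`;
hence `ψ` is indeed `T`-decidable and `Pr_T(#ψ)` holds in ℕ. -/
theorem I_am_decidable_is_provable (L : PropLang) (TrN : L.Sent → Prop)
    (hTrN : L.IsValuation TrN) (T : TheoryOn L)
    (hLog : T.ClosedUnderLogic) (hHBL : T.HBL) (hCons : T.Consistent)
    (hPrTrue : ∀ s, T.Prv s → TrN (T.Pr s))
    (hG2 : ∀ θ : L.Sent, (T.ext θ).Consistent →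
      ¬ (T.ext θ).Prv (L.neg ((T.ext θ).Pr L.falsum)))
    (ψ : L.Sent)
    (hψ : T.Prv (L.iffS ψ (L.disj (T.Pr ψ) (T.Pr (L.neg ψ))))) :
    T.Prv ψ ∧ TrN (L.disj (T.Pr ψ) (T.Pr (L.neg ψ))) := by

  obtain ⟨hT, hMP⟩ := hLog
  set Pp := T.Pr ψ with hPp
  set Pn := T.Pr (L.neg ψ) with hPn
  set PB := T.Pr (L.imp (L.neg ψ) L.falsum) with hPB
  -- step 1: T ⊢ PB → Pψ
  have taut1 : L.Taut (L.imp (L.imp (L.neg ψ) L.falsum) ψ) := by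
    rintro v ⟨hf, hn, hi, hc, hd, hiff⟩
    simp only [hi, hn]
    tauto
  have s1 : T.Prv (T.Pr (L.imp (L.imp (L.neg ψ) L.falsum) ψ)) :=
    hHBL.1 _ (hT _ taut1)
  have s3 : T.Prv (L.imp PB Pp) := hMP _ _ (hHBL.2.1 _ _) s1
  -- step 2: T ⊢ ¬ψ → ¬PB
  have taut2 : L.Taut (L.imp (L.iffS ψ (L.disj Pp Pn))
      (L.imp (L.imp PB Pp) (L.imp (L.neg ψ) (L.neg PB)))) := by
    rintro v ⟨hf, hn, hi, hc, hd, hiff⟩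
    simp only [hi, hn, hd, hiff]
    tauto
  have s4 : T.Prv (L.imp (L.neg ψ) (L.neg PB)) :=
    hMP _ _ (hMP _ _ (hT _ taut2) hψ) s3
  -- step 3: T + ¬ψ is inconsistent by G2
  have hinc : ¬ (T.ext (L.neg ψ)).Consistent := fun hc => hG2 _ hc s4
  obtain ⟨s, hs1, hs2⟩ : ∃ s, T.Prv (L.imp (L.neg ψ) s) ∧
      T.Prv (L.imp (L.neg ψ) (L.neg s)) := not_not.mp hinc
  -- step 4: T ⊢ ψ
  have taut3 : L.Taut (L.imp (L.imp (L.neg ψ) s)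
      (L.imp (L.imp (L.neg ψ) (L.neg s)) ψ)) := by
    rintro v ⟨hf, hn, hi, hc, hd, hiff⟩
    simp only [hi, hn]
    tauto
  have hprv : T.Prv ψ := hMP _ _ (hMP _ _ (hT _ taut3) hs1) hs2
  exact ⟨hprv, (hTrN.2.2.2.2.1 _ _).mpr (Or.inl (hPrTrue _ hprv))⟩
end
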